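/- arXiv:1311.5671 — 2 statements merged into one kernel-verified Lean document; each statement's English description precedes it below -/
import Mathlib

section
/- Let m1, m2, m3, m4 be integers with mi ≥ 2 for all i and Σ_{i=1}^{4}(1 − 1/mi) > 2. Then Σ_{i=1}^{4}(1 − 1/mi) ≥ 2 + 1/6. -/
/-! If every `mᵢ` equals `2` the sum is exactly `2`, so some `mᵢ` is at least `3`.
Then `1/mᵢ ≤ 1/3` for that index and `1/mⱼ ≤ 1/2` for the other three, so the sum is at least
`4 - 3/2 - 1/3 = 2 + 1/6`. -/

/-- For integers `m₁, m₂, m₃, m₄ ≥ 2` with `Σ (1 - 1/mᵢ) > 2`, one has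
`Σ (1 - 1/mᵢ) ≥ 2 + 1/6`. -/
theorem stmt1 (m₁ m₂ m₃ m₄ : ℤ) (h₁ : 2 ≤ m₁) (h₂ : 2 ≤ m₂) (h₃ : 2 ≤ m₃) (h₄ : 2 ≤ m₄)
    (h : (2 : ℚ) < (1 - 1 / m₁) + (1 - 1 / m₂) + (1 - 1 / m₃) + (1 - 1 / m₄)) :
    2 + 1 / 6 ≤ (1 - 1 / (m₁ : ℚ)) + (1 - 1 / m₂) + (1 - 1 / m₃) + (1 - 1 / m₄) := by
  have half_bound (m : ℤ) (hm : 2 ≤ m) : (1 : ℚ) / m ≤ 1 / 2 :=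
    one_div_le_one_div_of_le (by norm_num) (by exact_mod_cast hm)
  have third_bound (m : ℤ) (hm : 3 ≤ m) : (1 : ℚ) / m ≤ 1 / 3 :=
    one_div_le_one_div_of_le (by norm_num) (by exact_mod_cast hm)
  have not_all_two : ¬ (m₁ = 2 ∧ m₂ = 2 ∧ m₃ = 2 ∧ m₄ = 2) := by
    rintro ⟨rfl, rfl, rfl, rfl⟩
    norm_num at h
  have some_three_le : 3 ≤ m₁ ∨ 3 ≤ m₂ ∨ 3 ≤ m₃ ∨ 3 ≤ m₄ := by omega
  have := half_bound m₁ h₁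
  have := half_bound m₂ h₂
  have := half_bound m₃ h₃
  have := half_bound m₄ h₄
  rcases some_three_le with g | g | g | g <;> have := third_bound _ g <;> linarith
end

section
/- Let G be a finite group and let τ_1 = (m_{1,1},…,m_{1,r_1}) and τ_2 = (m_{2,1},…,m_{2,r_2}) be hyperbolic types. Then the number of Hurwitz components satisfies h(G;τ_1,τ_2) ≤ |G|^{r_1 + r_2 − 2}, and consequently h(G;τ_1,τ_2) ≤ (4·42²·χ(G;τ_1,τ_2))^{r_1 + r_2 − 2}. -/
/-- A Hurwitz move: replaces consecutive entries `x, y` by `y, y⁻¹ * x * y`. -/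
def HurwitzMove {G : Type*} [Group G] (L₁ L₂ : List G) : Prop :=
  ∃ (A B : List G) (x y : G), L₁ = A ++ x :: y :: B ∧ L₂ = A ++ y :: (y⁻¹ * x * y) :: B

/-- A spherical system of generators of `G` of unordered type `τ`. -/
def SphSys {G : Type*} [Group G] (τ : List ℕ) (L : List G) : Prop :=
  L.prod = 1 ∧ Subgroup.closure {x | x ∈ L} = ⊤ ∧ List.Perm (L.map orderOf) τ

/-- `Σ(V)`: the union of all conjugates of all powers of the entries of `L`. -/
def SigmaSet {G : Type*} [Group G] (L : List G) : Set G :=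
  {a | ∃ (g : G) (j : ℕ), ∃ x ∈ L, a = g * x ^ j * g⁻¹}

/-- `U(G;τ₁,τ₂)`: the set of unmixed ramification structures of type `(τ₁,τ₂)` on `G`. -/
def URam (G : Type*) [Group G] (τ₁ τ₂ : List ℕ) : Set (List G × List G) :=
  {P | SphSys τ₁ P.1 ∧ SphSys τ₂ P.2 ∧ SigmaSet P.1 ∩ SigmaSet P.2 = {1}}

/-- The elementary relations on pairs of systems of generators: Hurwitz moves in either
component, a simultaneous automorphism of `G`, or the swap of the two components. -/
def RamRel {G : Type*} [Group G] (P Q : List G × List G) : Prop :=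
  (HurwitzMove P.1 Q.1 ∧ P.2 = Q.2) ∨
  (P.1 = Q.1 ∧ HurwitzMove P.2 Q.2) ∨
  (∃ φ : G ≃* G, Q.1 = P.1.map φ ∧ Q.2 = P.2.map φ) ∨
  (Q = (P.2, P.1))

/-- `h(G;τ₁,τ₂)`: the number of Hurwitz components, i.e. the number of orbits of
`U(G;τ₁,τ₂)` under the equivalence generated by `RamRel`. -/
noncomputable def hCount (G : Type*) [Group G] (τ₁ τ₂ : List ℕ) : ℕ :=
  Nat.card (Quot (fun P Q : ↥(URam G τ₁ τ₂) => RamRel P.1 Q.1))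

/-- `χ(G;τ₁,τ₂)`, the Euler characteristic attached to `G` and a pair of types. -/
noncomputable def chiNum (G : Type*) [Group G] (τ₁ τ₂ : List ℕ) : ℝ :=
  (Nat.card G : ℝ) *
    (-2 + (τ₁.map (fun m => 1 - 1 / (m : ℝ))).sum) *
    (-2 + (τ₂.map (fun m => 1 - 1 / (m : ℝ))).sum) / 4

/-- A type `τ = (m₁,…,m_r)` is hyperbolic if all `mᵢ ≥ 2` and `Σ (1 - 1/mᵢ) > 2`. -/
def IsHyperbolicType (τ : List ℕ) : Prop :=
  (∀ m ∈ τ, 2 ≤ m) ∧ 2 < (τ.map (fun m => 1 - 1 / (m : ℝ))).sum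

/-!
An unmixed ramification structure is determined by all but the last entry of each of its two
spherical systems, since the product of each system is `1`; hence there are at most
`|G|^(r₁-1) · |G|^(r₂-1)` of them, and at least as many as there are Hurwitz components.
The second bound follows from the first because `-2 + Σ (1 - 1/mᵢ) ≥ 1/42` for every hyperbolic
type (Hurwitz's bound, attained at `(2,3,7)`), so that `|G| ≤ 4·42²·χ(G;τ₁,τ₂)`.
-/

section Counting

theorem List.eq_of_dropLast_eq {M : Type*} [LeftCancelMonoid M] {L L' : List M}
    (hlen : L.length = L'.length) (hprod : L.prod = L'.prod) (h : L.dropLast = L'.dropLast) :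
    L = L' := by
  rcases L.eq_nil_or_concat' with rfl | ⟨L, x, rfl⟩
  · exact (List.length_eq_zero_iff.mp hlen.symm).symm
  rcases L'.eq_nil_or_concat' with rfl | ⟨L', y, rfl⟩
  · simp at hlen
  rw [List.dropLast_concat, List.dropLast_concat] at h
  subst h
  obtain rfl : x = y := by simpa using hprod
  rfl

variable {G : Type*} [Group G] {τ₁ τ₂ : List ℕ}

theorem SphSys.length_eq {τ : List ℕ} {L : List G} (h : SphSys τ L) : L.length = τ.length := by
  simpa using h.2.2.length_eq

def URam.dropLastPair (P : URam G τ₁ τ₂) :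
    List.Vector G (τ₁.length - 1) × List.Vector G (τ₂.length - 1) :=
  (⟨P.1.1.dropLast, by rw [List.length_dropLast, P.2.1.length_eq]⟩,
    ⟨P.1.2.dropLast, by rw [List.length_dropLast, P.2.2.1.length_eq]⟩)

theorem URam.dropLastPair_injective :
    Function.Injective (URam.dropLastPair : URam G τ₁ τ₂ → _) := by
  intro P Q h
  have h₁ : P.1.1 = Q.1.1 :=
    List.eq_of_dropLast_eq (by rw [P.2.1.length_eq, Q.2.1.length_eq])
      (by rw [P.2.1.1, Q.2.1.1]) (congrArg (fun V => V.1.1) h)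
  have h₂ : P.1.2 = Q.1.2 :=
    List.eq_of_dropLast_eq (by rw [P.2.2.1.length_eq, Q.2.2.1.length_eq])
      (by rw [P.2.2.1.1, Q.2.2.1.1]) (congrArg (fun V => V.2.1) h)
  exact Subtype.ext (Prod.ext h₁ h₂)

instance [Finite G] : Finite (URam G τ₁ τ₂) :=
  Finite.of_injective _ URam.dropLastPair_injective

theorem URam.card_le [Finite G] :
    Nat.card (URam G τ₁ τ₂) ≤ Nat.card G ^ (τ₁.length - 1 + (τ₂.length - 1)) := by
  have : Fintype G := Fintype.ofFinite G
  calc Nat.card (URam G τ₁ τ₂)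
      ≤ Nat.card (List.Vector G (τ₁.length - 1) × List.Vector G (τ₂.length - 1)) :=
        Nat.card_le_card_of_injective _ URam.dropLastPair_injective
    _ = Nat.card G ^ (τ₁.length - 1 + (τ₂.length - 1)) := by
        rw [Nat.card_prod]
        simp only [Nat.card_eq_fintype_card, card_vector, pow_add]

theorem hCount_le_card [Finite G] : hCount G τ₁ τ₂ ≤ Nat.card (URam G τ₁ τ₂) :=
  Nat.card_le_card_of_surjective _ Quot.mk_surjective

end Counting

theorem one_div_add_one_div_add_one_div_le {a b c : ℕ} (ha : 2 ≤ a) (hab : a ≤ b) (hbc : b ≤ c)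
    (h : (1 : ℝ) / a + 1 / b + 1 / c < 1) : (1 : ℝ) / a + 1 / b + 1 / c ≤ 41 / 42 := by
  have hc : (0 : ℝ) < c := by exact_mod_cast (show 0 < c by omega)
  have lt_of_one_div_lt : ∀ n : ℕ, (1 : ℝ) / c < 1 / n → n < c := fun n hn => by
    exact_mod_cast lt_of_one_div_lt_one_div hc hn
  obtain rfl | rfl | ha4 : a = 2 ∨ a = 3 ∨ 4 ≤ a := by omega
  · obtain rfl | rfl | rfl | hb5 : b = 2 ∨ b = 3 ∨ b = 4 ∨ 5 ≤ b := by omega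
    · norm_num at h
      linarith [one_div_pos.2 hc]
    · have hc7 : 7 ≤ c := lt_of_one_div_lt 6 (by norm_num at h ⊢; linarith)
      calc _ ≤ (1 : ℝ) / 2 + 1 / 3 + 1 / 7 := by gcongr <;> norm_cast
        _ ≤ 41 / 42 := by norm_num
    · have hc5 : 5 ≤ c := lt_of_one_div_lt 4 (by norm_num at h ⊢; linarith)
      calc _ ≤ (1 : ℝ) / 2 + 1 / 4 + 1 / 5 := by gcongr <;> norm_cast
        _ ≤ 41 / 42 := by norm_num
    · calc _ ≤ (1 : ℝ) / 2 + 1 / 5 + 1 / 5 := by gcongr <;> norm_cast; omega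
        _ ≤ 41 / 42 := by norm_num
  · obtain rfl | hb4 : b = 3 ∨ 4 ≤ b := by omega
    · have hc4 : 4 ≤ c := lt_of_one_div_lt 3 (by norm_num at h ⊢; linarith)
      calc _ ≤ (1 : ℝ) / 3 + 1 / 3 + 1 / 4 := by gcongr <;> norm_cast
        _ ≤ 41 / 42 := by norm_num
    · calc _ ≤ (1 : ℝ) / 3 + 1 / 4 + 1 / 4 := by gcongr <;> norm_cast; omega
        _ ≤ 41 / 42 := by norm_num
  · calc _ ≤ (1 : ℝ) / 4 + 1 / 4 + 1 / 4 := by gcongr <;> norm_cast <;> omega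
      _ ≤ 41 / 42 := by norm_num

-- The left-hand side is how `τ.map (fun m => 1 - 1 / (m : ℝ))` elaborates in the definitions
-- above: `τ` is first coerced to a list of reals through the list monad.
theorem List.map_one_sub_one_div_natCast (τ : List ℕ) :
    τ.map (fun m => 1 - 1 / (m : ℝ)) = τ.map fun m : ℕ => 1 - 1 / (m : ℝ) := by
  simp only [List.pure_def, List.bind_eq_flatMap, ← List.map_eq_flatMap, List.map_map]
  rfl

theorem sum_one_sub_one_div_le_length (τ : List ℕ) :
    (τ.map fun m : ℕ => 1 - 1 / (m : ℝ)).sum ≤ τ.length := by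
  have := List.sum_le_card_nsmul (τ.map fun m : ℕ => 1 - 1 / (m : ℝ)) 1 (by
    simp only [List.forall_mem_map, sub_le_self_iff]
    intro m _
    positivity)
  rwa [List.length_map, nsmul_one] at this

theorem length_div_two_le_sum_one_sub_one_div {τ : List ℕ} (h : ∀ m ∈ τ, 2 ≤ m) :
    (τ.length : ℝ) / 2 ≤ (τ.map fun m : ℕ => 1 - 1 / (m : ℝ)).sum := by
  have := List.card_nsmul_le_sum (τ.map fun m : ℕ => 1 - 1 / (m : ℝ)) (1 / 2) (by
    simp only [List.forall_mem_map]
    intro m hm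
    have : (1 : ℝ) / m ≤ 1 / 2 := by gcongr; exact_mod_cast h m hm
    linarith)
  rwa [List.length_map, nsmul_eq_mul, mul_one_div] at this

theorem isHyperbolicType_iff {τ : List ℕ} :
    IsHyperbolicType τ ↔ (∀ m ∈ τ, 2 ≤ m) ∧ 2 < (τ.map fun m : ℕ => 1 - 1 / (m : ℝ)).sum := by
  rw [IsHyperbolicType, List.map_one_sub_one_div_natCast]

theorem IsHyperbolicType.two_lt_length {τ : List ℕ} (h : IsHyperbolicType τ) : 2 < τ.length := by
  have := (isHyperbolicType_iff.mp h).2.trans_le (sum_one_sub_one_div_le_length τ)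
  exact_mod_cast this

theorem IsHyperbolicType.one_div_forty_two_le_of_pairwise {τ : List ℕ}
    (hτ : τ.Pairwise (· ≤ ·)) (h : IsHyperbolicType τ) :
    1 / 42 ≤ -2 + (τ.map fun m : ℕ => 1 - 1 / (m : ℝ)).sum := by
  have hlen := h.two_lt_length
  obtain ⟨h2, hsum⟩ := isHyperbolicType_iff.mp h
  rcases τ with _ | ⟨a, _ | ⟨b, _ | ⟨c, _ | ⟨d, _ | ⟨e, t⟩⟩⟩⟩⟩ <;> simp at hlen
  · simp only [List.pairwise_cons, List.mem_cons] at hτ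
    simp only [List.map_cons, List.map_nil, List.sum_cons, List.sum_nil] at hsum ⊢
    have := one_div_add_one_div_add_one_div_le (h2 a (by simp)) (hτ.1 b (by simp))
      (hτ.2.1 c (by simp)) (by linarith)
    linarith
  · simp only [List.pairwise_cons, List.mem_cons] at hτ
    simp only [List.map_cons, List.map_nil, List.sum_cons, List.sum_nil] at hsum ⊢
    have ha := h2 a (by simp)
    have hab := hτ.1 b (by simp)
    have hbc := hτ.2.1 c (by simp)
    have hcd := hτ.2.2.1 d (by simp)
    -- not all four orders are `2`, so the largest one is at least `3`
    obtain hd : 3 ≤ d := by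
      by_contra! hd
      obtain ⟨rfl, rfl, rfl, rfl⟩ : a = 2 ∧ b = 2 ∧ c = 2 ∧ d = 2 := by omega
      norm_num at hsum
    have : (1 : ℝ) / a ≤ 1 / 2 := by gcongr; exact_mod_cast ha
    have : (1 : ℝ) / b ≤ 1 / 2 := by gcongr; exact_mod_cast ha.trans hab
    have : (1 : ℝ) / c ≤ 1 / 2 := by gcongr; exact_mod_cast (ha.trans hab).trans hbc
    have : (1 : ℝ) / d ≤ 1 / 3 := by gcongr; exact_mod_cast hd
    linarith
  · have := length_div_two_le_sum_one_sub_one_div h2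
    simp only [List.length_cons] at this
    push_cast at this
    linarith [(t.length.cast_nonneg : (0 : ℝ) ≤ t.length)]

theorem IsHyperbolicType.one_div_forty_two_le {τ : List ℕ} (h : IsHyperbolicType τ) :
    1 / 42 ≤ -2 + (τ.map fun m : ℕ => 1 - 1 / (m : ℝ)).sum := by
  have hperm := List.perm_insertionSort (· ≤ ·) τ
  have hsum := (hperm.map fun m : ℕ => 1 - 1 / (m : ℝ)).sum_eq
  obtain ⟨h2, hτ⟩ := isHyperbolicType_iff.mp h
  have hsorted : IsHyperbolicType (τ.insertionSort (· ≤ ·)) :=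
    isHyperbolicType_iff.mpr ⟨fun m hm => h2 m (hperm.subset hm), hsum ▸ hτ⟩
  rw [← hsum]
  exact hsorted.one_div_forty_two_le_of_pairwise (List.pairwise_insertionSort _ τ)

theorem card_le_four_mul_forty_two_sq_mul_chiNum (G : Type*) [Group G] {τ₁ τ₂ : List ℕ}
    (h₁ : IsHyperbolicType τ₁) (h₂ : IsHyperbolicType τ₂) :
    (Nat.card G : ℝ) ≤ 4 * 42 ^ 2 * chiNum G τ₁ τ₂ := by
  have e₁ := h₁.one_div_forty_two_le
  have e₂ := h₂.one_div_forty_two_le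
  rw [chiNum, List.map_one_sub_one_div_natCast, List.map_one_sub_one_div_natCast]
  set x₁ := -2 + (τ₁.map fun m : ℕ => 1 - 1 / (m : ℝ)).sum
  set x₂ := -2 + (τ₂.map fun m : ℕ => 1 - 1 / (m : ℝ)).sum
  calc (Nat.card G : ℝ) = Nat.card G * (42 * (1 / 42)) * (42 * (1 / 42)) := by norm_num
    _ ≤ Nat.card G * (42 * x₁) * (42 * x₂) := by gcongr
    _ = 4 * 42 ^ 2 * (Nat.card G * x₁ * x₂ / 4) := by ring

/-- Proposition 4.1(ii): for a finite group `G` and hyperbolic types `τ₁, τ₂`,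
`h(G;τ₁,τ₂) ≤ |G|^(r₁+r₂-2)` and hence `h(G;τ₁,τ₂) ≤ (4·42²·χ(G;τ₁,τ₂))^(r₁+r₂-2)`. -/
theorem stmt5 (G : Type*) [Group G] [Finite G] (τ₁ τ₂ : List ℕ)
    (h₁ : IsHyperbolicType τ₁) (h₂ : IsHyperbolicType τ₂) :
    hCount G τ₁ τ₂ ≤ Nat.card G ^ (τ₁.length + τ₂.length - 2) ∧
    (hCount G τ₁ τ₂ : ℝ) ≤ (4 * 42 ^ 2 * chiNum G τ₁ τ₂) ^ (τ₁.length + τ₂.length - 2) := by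
  have hcount : hCount G τ₁ τ₂ ≤ Nat.card G ^ (τ₁.length + τ₂.length - 2) := by
    have hr₁ := h₁.two_lt_length
    have hr₂ := h₂.two_lt_length
    calc hCount G τ₁ τ₂ ≤ Nat.card (URam G τ₁ τ₂) := hCount_le_card
      _ ≤ Nat.card G ^ (τ₁.length - 1 + (τ₂.length - 1)) := URam.card_le
      _ = Nat.card G ^ (τ₁.length + τ₂.length - 2) := by congr 1; omega
  refine ⟨hcount, ?_⟩
  calc (hCount G τ₁ τ₂ : ℝ) ≤ (Nat.card G : ℝ) ^ (τ₁.length + τ₂.length - 2) := by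
        exact_mod_cast hcount
    _ ≤ (4 * 42 ^ 2 * chiNum G τ₁ τ₂) ^ (τ₁.length + τ₂.length - 2) := by
        gcongr
        exact card_le_four_mul_forty_two_sq_mul_chiNum G h₁ h₂
end
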